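/- arXiv:2012.09541 — 2 statements merged into one kernel-verified Lean document; each statement's English description precedes it below -/
import Mathlib

section
/- For every hiring problem (W, M, s, m) and every sequence of hires λ = ⟨q₁,…,q_t⟩ with q₁+⋯+q_t ≤ |W| and m·(q₁+⋯+q_r) an integer for every r ≤ t, the set φ^SA(W,λ) selected by the sequential adjusted minority reserves rule respects minority rights for quota q₁+⋯+q_t and is minority fair. -/
open Finset

variable {ι : Type*} [DecidableEq ι]

/-- The (up to) `k` highest-scoring elements of `X`, chosen greedily
(with injective scores this is the set of the `k` highest-scoring elements). -/
noncomputable def topOf (s : ι → ℝ) : ℕ → Finset ι → Finset ι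
  | 0, _ => ∅
  | k + 1, X =>
    if h : X.Nonempty then
      insert (X.exists_max_image s h).choose
        (topOf s k (X.erase (X.exists_max_image s h).choose))
    else ∅

/-- `H` respects minority rights for quota `q` (w.r.t. minorities `M` and ratio `m`):
either `|M| ≥ m·q` and the fraction of minorities in `H` is at least `m`
(stated multiplicatively as `ω(H) ≥ m·|H|`), or `|M| < m·q` and `M ⊆ H`. -/
def RespectsRightsSet (M : Finset ι) (m : ℝ) (q : ℕ) (H : Finset ι) : Prop :=
  (m * (q : ℝ) ≤ (M.card : ℝ) ∧ m * (H.card : ℝ) ≤ ((H ∩ M).card : ℝ)) ∨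
  ((M.card : ℝ) < m * (q : ℝ) ∧ M ⊆ H)

/-- `H` is minority fair (w.r.t. workers `W`, minorities `M`, scores `s`, ratio `m`):
(i) within `M` and within `W ∖ M` selection follows the scores; (ii) no minority with a
higher score is left out while a non-minority is hired; (iii) a lower-scoring minority is
hired over a higher-scoring non-minority only if the minority fraction of `H` is at most
`m` (stated multiplicatively as `ω(H) ≤ m·|H|`). -/
def MinorityFairSet (W M : Finset ι) (s : ι → ℝ) (m : ℝ) (H : Finset ι) : Prop :=
  (∀ w ∈ M, ∀ w' ∈ M, w ∈ H → w' ∉ H → s w' < s w) ∧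
  (∀ w ∈ W \ M, ∀ w' ∈ W \ M, w ∈ H → w' ∉ H → s w' < s w) ∧
  (∀ w ∈ W \ M, ∀ w' ∈ M, s w < s w' → w ∈ H → w' ∈ H) ∧
  ((∃ w ∈ W \ M, ∃ w' ∈ M, s w' < s w ∧ w ∉ H ∧ w' ∈ H) →
    ((H ∩ M).card : ℝ) ≤ m * (H.card : ℝ))

/-- One round of the adjusted minority reserves choice from pool `P`: `hired` is the
number of minority workers hired in earlier rounds, `Q` is the cumulative quota up to and
including this round, and `q` is the quota of this round.  First the
`min(max(⌈m·Q⌉ − hired, 0), |M ∩ P|)` highest-scoring available minority workers are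
hired, then the highest-scoring remaining available workers fill up to `q` hires. -/
noncomputable def saRound (M : Finset ι) (s : ι → ℝ) (m : ℝ) (P : Finset ι)
    (hired Q q : ℕ) : Finset ι :=
  let A1 := topOf s (min (⌈m * (Q : ℝ)⌉₊ - hired) (P ∩ M).card) (P ∩ M)
  A1 ∪ topOf s (q - A1.card) (P \ A1)

/-- Auxiliary recursion for the sequential adjusted minority reserves rule:
`P` is the current pool, `A` the set of previously hired workers and `Q` the cumulative
quota of previous rounds. -/
noncomputable def phiSAaux (M : Finset ι) (s : ι → ℝ) (m : ℝ) :
    Finset ι → Finset ι → ℕ → List ℕ → Finset ι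
  | _, _, _, [] => ∅
  | P, A, Q, q :: rest =>
    let H := saRound M s m P ((A ∩ M).card) (Q + q) q
    H ∪ phiSAaux M s m (P \ H) (A ∪ H) (Q + q) rest

/-- The sequential adjusted minority reserves rule `φ^SA`. -/
noncomputable def phiSA (M : Finset ι) (s : ι → ℝ) (m : ℝ) (W : Finset ι)
    (lam : List ℕ) : Finset ι :=
  phiSAaux M s m W ∅ 0 lam

set_option linter.unusedSectionVars false

lemma topOf_subset (s : ι → ℝ) : ∀ (k : ℕ) (X : Finset ι), topOf s k X ⊆ X := by
  intro k
  induction k with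
  | zero => intro X; rw [topOf]; exact empty_subset _
  | succ k ih =>
    intro X
    rw [topOf]
    split_ifs with h
    · obtain ⟨hx, -⟩ := (X.exists_max_image s h).choose_spec
      exact insert_subset hx ((ih _).trans (erase_subset _ _))
    · exact empty_subset _

lemma card_topOf (s : ι → ℝ) : ∀ (k : ℕ) (X : Finset ι), (topOf s k X).card = min k X.card := by
  intro k
  induction k with
  | zero => intro X; rw [topOf]; simp
  | succ k ih =>
    intro X
    rw [topOf]
    split_ifs with h
    · obtain ⟨hx, -⟩ := (X.exists_max_image s h).choose_spec
      have hnot : (X.exists_max_image s h).choose ∉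
          topOf s k (X.erase (X.exists_max_image s h).choose) :=
        fun hc => (mem_erase.1 (topOf_subset s k _ hc)).1 rfl
      rw [card_insert_of_notMem hnot, ih, card_erase_of_mem hx]
      have : 1 ≤ X.card := card_pos.2 h
      omega
    · rw [not_nonempty_iff_eq_empty] at h; simp [h, topOf]

lemma topOf_le (s : ι → ℝ) : ∀ (k : ℕ) (X : Finset ι),
    ∀ a ∈ topOf s k X, ∀ b ∈ X, b ∉ topOf s k X → s b ≤ s a := by
  intro k
  induction k with
  | zero => intro X a ha; rw [topOf] at ha; simp at ha
  | succ k ih =>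
    intro X a ha b hb hbn
    rw [topOf] at ha hbn
    split_ifs at ha hbn with h
    · obtain ⟨hx, hmax⟩ := (X.exists_max_image s h).choose_spec
      rcases mem_insert.1 ha with rfl | ha'
      · exact hmax b hb
      · have hbne : b ≠ (X.exists_max_image s h).choose :=
          fun e => hbn (e ▸ mem_insert_self _ _)
        exact ih _ a ha' b (mem_erase.2 ⟨hbne, hb⟩) fun hc => hbn (mem_insert_of_mem hc)
    · simp at ha

lemma strictOn {W : Finset ι} {s : ι → ℝ} (hs : Set.InjOn s ↑W) {a b : ι}
    (ha : a ∈ W) (hb : b ∈ W) (hne : b ≠ a) (h : s b ≤ s a) : s b < s a :=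
  lt_of_le_of_ne h (fun e => hne (hs hb ha e))

structure SAInv (W M : Finset ι) (s : ι → ℝ) (m : ℝ) (A : Finset ι) (Q : ℕ) : Prop where
  sub : A ⊆ W
  hcard : A.card = Q
  rights : m * (Q : ℝ) ≤ ((A ∩ M).card : ℝ) ∨ M ⊆ A
  fairM : ∀ w ∈ M, ∀ w' ∈ M, w ∈ A → w' ∉ A → s w' < s w
  fairN : ∀ w ∈ W \ M, ∀ w' ∈ W \ M, w ∈ A → w' ∉ A → s w' < s w
  fair2 : ∀ w ∈ W \ M, w ∈ A → ∀ w' ∈ M, w' ∉ A → s w' < s w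
  fair3 : (∃ w ∈ W \ M, ∃ w' ∈ M, s w' < s w ∧ w ∉ A ∧ w' ∈ A) →
    ((A ∩ M).card : ℝ) ≤ m * (Q : ℝ)


lemma round_inv {W M : Finset ι} {s : ι → ℝ} {m : ℝ} (hMW : M ⊆ W)
    (hs : Set.InjOn s ↑W) (hm0 : 0 ≤ m) (hm1 : m ≤ 1)
    {A : Finset ι} {Q q : ℕ} (hinv : SAInv W M s m A Q)
    (hQ : ∃ k : ℕ, m * (Q : ℝ) = (k : ℝ))
    (hQ' : ∃ k : ℕ, m * ((Q + q : ℕ) : ℝ) = (k : ℝ))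
    (hle : Q + q ≤ W.card) :
    saRound M s m (W \ A) ((A ∩ M).card) (Q + q) q ⊆ W \ A ∧
    SAInv W M s m (A ∪ saRound M s m (W \ A) ((A ∩ M).card) (Q + q) q) (Q + q) := by
  obtain ⟨kQ, hkQ⟩ := hQ
  obtain ⟨kQ', hkQ'⟩ := hQ'
  set P : Finset ι := W \ A with hP
  set ω : ℕ := (A ∩ M).card with hω
  have hceil : ⌈m * ((Q + q : ℕ) : ℝ)⌉₊ = kQ' := by rw [hkQ']; exact Nat.ceil_natCast _
  set t : ℕ := kQ' - ω with ht
  set PM : Finset ι := P ∩ M with hPM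
  set A1 : Finset ι := topOf s (min t PM.card) PM with hA1
  set A2 : Finset ι := topOf s (q - A1.card) (P \ A1) with hA2
  have hsa : saRound M s m P ω (Q + q) q = A1 ∪ A2 := by
    rw [saRound]; rw [hceil]
  rw [hsa]
  set H : Finset ι := A1 ∪ A2 with hH
  -- basic memberships
  have hA1PM : A1 ⊆ PM := topOf_subset s _ _
  have hA1P : A1 ⊆ P := hA1PM.trans (inter_subset_left)
  have hA1M : A1 ⊆ M := hA1PM.trans (inter_subset_right)
  have hA2P : A2 ⊆ P \ A1 := topOf_subset s _ _
  have hHP : H ⊆ P := union_subset hA1P (hA2P.trans (sdiff_subset))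
  have hPW : P ⊆ W := sdiff_subset
  have hdisj12 : Disjoint A1 A2 := disjoint_left.2 fun a ha1 ha2 => (mem_sdiff.1 (hA2P ha2)).2 ha1
  have hdisjAH : Disjoint A H := disjoint_left.2 fun a haA haH => (mem_sdiff.1 (hHP haH)).2 haA
  -- cards
  have hcardA1 : A1.card = min t PM.card := by
    rw [hA1, card_topOf]; omega
  have hPMcard : PM.card ≤ M.card := card_le_card inter_subset_right
  have hPcard : P.card = W.card - Q := by
    rw [hP, card_sdiff_of_subset hinv.sub, hinv.hcard]
  have hqP : q ≤ P.card := by omega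
  have hA1q : A1.card ≤ q := by
    rcases hinv.rights with hr | hr
    · -- kQ ≤ ω and kQ' ≤ kQ + q
      have h1 : (kQ : ℝ) ≤ (ω : ℝ) := by rw [← hkQ]; exact hr
      have h1' : kQ ≤ ω := by exact_mod_cast h1
      have h2 : (kQ' : ℝ) ≤ (kQ : ℝ) + q := by
        rw [← hkQ', ← hkQ]; push_cast; nlinarith
      have h2' : kQ' ≤ kQ + q := by exact_mod_cast h2
      omega
    · have hPMe : PM = ∅ := by
        rw [hPM, hP]
        apply eq_empty_of_forall_notMem
        intro x hx
        rcases mem_inter.1 hx with ⟨hx1, hx2⟩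
        exact (mem_sdiff.1 hx1).2 (hr hx2)
      rw [hcardA1, hPMe]; simp
  have hcardA2 : A2.card = q - A1.card := by
    rw [hA2, card_topOf, card_sdiff_of_subset hA1P]
    omega
  have hcardH : H.card = q := by
    rw [hH, card_union_of_disjoint hdisj12]; omega
  have hcardAH : (A ∪ H).card = Q + q := by
    rw [card_union_of_disjoint hdisjAH, hinv.hcard, hcardH]
  -- minority count
  have hA1M' : A1 ∩ M = A1 := inter_eq_left.2 hA1M
  have hωAH : ((A ∪ H) ∩ M).card = ω + A1.card + (A2 ∩ M).card := by
    have hd2 : Disjoint A1 (A2 ∩ M) := hdisj12.mono_right inter_subset_left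
    have hd1 : Disjoint (A ∩ M) (A1 ∪ A2 ∩ M) :=
      hdisjAH.mono inter_subset_left
        (union_subset subset_union_left (inter_subset_left.trans subset_union_right))
    rw [union_inter_distrib_right, hH, union_inter_distrib_right, hA1M',
      card_union_of_disjoint hd1, card_union_of_disjoint hd2]
    omega
  -- strict comparison helpers
  have hA1top : ∀ w ∈ A1, ∀ w' ∈ M, w' ∈ W → w' ∉ A → w' ∉ A1 → s w' < s w := by
    intro w hw w' hw'M hw'W hw'A hw'1
    have hw'PM : w' ∈ PM := mem_inter.2 ⟨mem_sdiff.2 ⟨hw'W, hw'A⟩, hw'M⟩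
    refine strictOn hs (hPW (hA1P hw)) hw'W (fun e => hw'1 (e ▸ hw)) ?_
    exact topOf_le s _ _ w hw w' hw'PM hw'1
  have hA2top : ∀ w ∈ A2, ∀ w' ∈ W, w' ∉ A → w' ∉ A1 → w' ∉ A2 → s w' < s w := by
    intro w hw w' hw'W hw'A hw'1 hw'2
    have hw' : w' ∈ P \ A1 := mem_sdiff.2 ⟨mem_sdiff.2 ⟨hw'W, hw'A⟩, hw'1⟩
    refine strictOn hs (hPW (mem_sdiff.1 (hA2P hw)).1) hw'W (fun e => hw'2 (e ▸ hw)) ?_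
    exact topOf_le s _ _ w hw w' hw' hw'2
  refine ⟨hHP, ?_, hcardAH, ?_, ?_, ?_, ?_, ?_⟩
  · exact union_subset hinv.sub (hHP.trans hPW)
  · -- rights
    by_cases hcase : t ≤ PM.card
    · left
      have h1 : kQ' ≤ ω + A1.card := by omega
      have h2 : kQ' ≤ ((A ∪ H) ∩ M).card := by rw [hωAH]; omega
      rw [hkQ']; exact_mod_cast h2
    · right
      have hA1eq : A1 = PM := eq_of_subset_of_card_le hA1PM (by omega)
      intro x hx
      by_cases hxA : x ∈ A
      · exact mem_union_left _ hxA
      · have : x ∈ PM := mem_inter.2 ⟨mem_sdiff.2 ⟨hMW hx, hxA⟩, hx⟩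
        exact mem_union_right _ (mem_union_left _ (hA1eq ▸ this))
  · -- fairM
    intro w hwM w' hw'M hw hw'
    have hw'A : w' ∉ A := fun h => hw' (mem_union_left _ h)
    have hw'1 : w' ∉ A1 := fun h => hw' (mem_union_right _ (mem_union_left _ h))
    have hw'2 : w' ∉ A2 := fun h => hw' (mem_union_right _ (mem_union_right _ h))
    rcases mem_union.1 hw with hwA | hwH
    · exact hinv.fairM w hwM w' hw'M hwA hw'A
    · rcases mem_union.1 hwH with h1 | h2
      · exact hA1top w h1 w' hw'M (hMW hw'M) hw'A hw'1
      · exact hA2top w h2 w' (hMW hw'M) hw'A hw'1 hw'2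
  · -- fairN
    intro w hwWM w' hw'WM hw hw'
    have hw'A : w' ∉ A := fun h => hw' (mem_union_left _ h)
    have hw'1 : w' ∉ A1 := fun h => (mem_sdiff.1 hw'WM).2 (hA1M h)
    have hw'2 : w' ∉ A2 := fun h => hw' (mem_union_right _ (mem_union_right _ h))
    rcases mem_union.1 hw with hwA | hwH
    · exact hinv.fairN w hwWM w' hw'WM hwA hw'A
    · rcases mem_union.1 hwH with h1 | h2
      · exact absurd (hA1M h1) (mem_sdiff.1 hwWM).2
      · exact hA2top w h2 w' (mem_sdiff.1 hw'WM).1 hw'A hw'1 hw'2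
  · -- fair2
    intro w hwWM hw w' hw'M hw'
    have hw'A : w' ∉ A := fun h => hw' (mem_union_left _ h)
    have hw'1 : w' ∉ A1 := fun h => hw' (mem_union_right _ (mem_union_left _ h))
    have hw'2 : w' ∉ A2 := fun h => hw' (mem_union_right _ (mem_union_right _ h))
    rcases mem_union.1 hw with hwA | hwH
    · exact hinv.fair2 w hwWM hwA w' hw'M hw'A
    · rcases mem_union.1 hwH with h1 | h2
      · exact absurd (hA1M h1) (mem_sdiff.1 hwWM).2
      · exact hA2top w h2 w' (hMW hw'M) hw'A hw'1 hw'2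
  · -- fair3
    rintro ⟨w, hwWM, w', hw'M, hlt, hwn, hw'in⟩
    have hwW : w ∈ W := (mem_sdiff.1 hwWM).1
    have hwA : w ∉ A := fun h => hwn (mem_union_left _ h)
    have hw1 : w ∉ A1 := fun h => (mem_sdiff.1 hwWM).2 (hA1M h)
    have hw2 : w ∉ A2 := fun h => hwn (mem_union_right _ (mem_union_right _ h))
    have hA2M : A2 ∩ M = ∅ := by
      apply eq_empty_of_forall_notMem
      intro u hu
      rcases mem_inter.1 hu with ⟨hu2, huM⟩
      have hsu : s w < s u := hA2top u hu2 w hwW hwA hw1 hw2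
      rcases mem_union.1 hw'in with hw'A | hw'H
      · have hu'A : u ∉ A := (mem_sdiff.1 (hA2P hu2)).1 |> fun h => (mem_sdiff.1 h).2
        exact absurd (hinv.fairM w' hw'M u huM hw'A hu'A) (by linarith)
      · rcases mem_union.1 hw'H with h1 | h2
        · have hu1 : u ∉ A1 := fun h => (mem_sdiff.1 (hA2P hu2)).2 h
          have huA : u ∉ A := (mem_sdiff.1 (mem_sdiff.1 (hA2P hu2)).1).2
          exact absurd (hA1top w' h1 u huM (hPW (mem_sdiff.1 (hA2P hu2)).1) huA hu1)
            (by linarith)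
        · exact absurd (hA2top w' h2 w hwW hwA hw1 hw2) (by linarith)
    rw [hωAH, hA2M, card_empty]
    by_cases hA1z : A1.card = 0
    · have hw'A : w' ∈ A := by
        rcases mem_union.1 hw'in with h | h
        · exact h
        · rcases mem_union.1 h with h1 | h2
          · exact absurd (card_eq_zero.1 hA1z ▸ h1) (notMem_empty _)
          · exact absurd (mem_inter.2 ⟨h2, hw'M⟩) (hA2M ▸ notMem_empty _)
      have hold : ((A ∩ M).card : ℝ) ≤ m * Q :=
        hinv.fair3 ⟨w, hwWM, w', hw'M, hlt, hwA, hw'A⟩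
      rw [hA1z]
      have hgoal : ((A ∩ M).card : ℝ) ≤ m * ((Q + q : ℕ) : ℝ) := by
        have h2 : m * (Q : ℝ) ≤ m * ((Q + q : ℕ) : ℝ) := by push_cast; nlinarith
        linarith
      simpa [hω] using hgoal
    · have h1 : ω + A1.card ≤ kQ' := by
        have : A1.card ≤ t := by omega
        omega
      have h2 : ((ω + A1.card : ℕ) : ℝ) ≤ m * ((Q + q : ℕ) : ℝ) := by
        rw [hkQ']; exact_mod_cast h1
      push_cast at h2 ⊢
      linarith

lemma phiSAaux_inv {W M : Finset ι} {s : ι → ℝ} {m : ℝ} (hMW : M ⊆ W)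
    (hs : Set.InjOn s ↑W) (hm0 : 0 ≤ m) (hm1 : m ≤ 1) :
    ∀ (lam : List ℕ) (A : Finset ι) (Q : ℕ), SAInv W M s m A Q →
      (∀ r : ℕ, ∃ k : ℕ, m * ((Q + (lam.take r).sum : ℕ) : ℝ) = (k : ℝ)) →
      Q + lam.sum ≤ W.card →
      SAInv W M s m (A ∪ phiSAaux M s m (W \ A) A Q lam) (Q + lam.sum) := by
  intro lam
  induction lam with
  | nil =>
    intro A Q hinv _ _
    simpa [phiSAaux] using hinv
  | cons q rest ih =>
    intro A Q hinv hint hsum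
    have hQ : ∃ k : ℕ, m * (Q : ℝ) = (k : ℝ) := by
      obtain ⟨k, hk⟩ := hint 0
      exact ⟨k, by simpa using hk⟩
    have hQ' : ∃ k : ℕ, m * ((Q + q : ℕ) : ℝ) = (k : ℝ) := by
      obtain ⟨k, hk⟩ := hint 1
      exact ⟨k, by simpa using hk⟩
    have hle : Q + q ≤ W.card := by
      simp only [List.sum_cons] at hsum; omega
    obtain ⟨hHsub, hinv'⟩ := round_inv hMW hs hm0 hm1 hinv hQ hQ' hle
    set H := saRound M s m (W \ A) ((A ∩ M).card) (Q + q) q with hHdef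
    have hpool : (W \ A) \ H = W \ (A ∪ H) := by
      ext x; simp only [mem_sdiff, mem_union]; tauto
    have hint' : ∀ r : ℕ, ∃ k : ℕ, m * (((Q + q) + (rest.take r).sum : ℕ) : ℝ) = (k : ℝ) := by
      intro r
      obtain ⟨k, hk⟩ := hint (r + 1)
      refine ⟨k, ?_⟩
      rw [← hk]
      congr 2
      simp [List.take_cons, List.sum_cons]
      omega
    have hsum' : (Q + q) + rest.sum ≤ W.card := by
      simp only [List.sum_cons] at hsum; omega
    have := ih (A ∪ H) (Q + q) hinv' hint' hsum'
    have hunf : phiSAaux M s m (W \ A) A Q (q :: rest) =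
        H ∪ phiSAaux M s m ((W \ A) \ H) (A ∪ H) (Q + q) rest := rfl
    rw [hunf, hpool, ← union_assoc]
    simpa [List.sum_cons, add_assoc] using this


/-- For every hiring problem `(W, M, s, m)` and every sequence of hires
`λ = ⟨q₁,…,q_t⟩` with `q₁+⋯+q_t ≤ |W|` and `m·(q₁+⋯+q_r)` an integer for every `r ≤ t`,
the set `φ^SA(W,λ)` selected by the sequential adjusted minority reserves rule respects
minority rights for quota `q₁+⋯+q_t` and is minority fair. -/
theorem phiSA_respects_rights_and_fair (W M : Finset ι) (s : ι → ℝ) (m : ℝ)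
    (lam : List ℕ)
    (hMW : M ⊆ W) (hs : Set.InjOn s ↑W) (hm0 : 0 ≤ m) (hm1 : m ≤ 1)
    (hsum : lam.sum ≤ W.card)
    (hint : ∀ r : ℕ, ∃ k : ℕ, m * (((lam.take r).sum : ℕ) : ℝ) = (k : ℝ)) :
    RespectsRightsSet M m lam.sum (phiSA M s m W lam) ∧
      MinorityFairSet W M s m (phiSA M s m W lam) := by
  have base : SAInv W M s m (∅ : Finset ι) 0 := by
    refine ⟨empty_subset _, card_empty, Or.inl (by simp), by simp, by simp, by simp, ?_⟩
    rintro ⟨w, -, w', -, -, -, h⟩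
    simp at h
  have hint0 : ∀ r : ℕ, ∃ k : ℕ, m * ((0 + (lam.take r).sum : ℕ) : ℝ) = (k : ℝ) := by
    simpa using hint
  have hinv0 := phiSAaux_inv hMW hs hm0 hm1 lam ∅ 0 base hint0 (by simpa using hsum)
  have hinv : SAInv W M s m (phiSA M s m W lam) lam.sum := by
    simpa [phiSA, sdiff_empty] using hinv0
  have hcard : (phiSA M s m W lam).card = lam.sum := hinv.hcard
  constructor
  · rcases hinv.rights with h | h
    · left
      refine ⟨le_trans h ?_, by rw [hcard]; exact h⟩
      exact_mod_cast card_le_card (inter_subset_right : phiSA M s m W lam ∩ M ⊆ M)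
    · by_cases hc : m * ((lam.sum : ℕ) : ℝ) ≤ (M.card : ℝ)
      · left
        have he : phiSA M s m W lam ∩ M = M := inter_eq_right.2 h
        exact ⟨hc, by rw [hcard, he]; exact hc⟩
      · right
        exact ⟨lt_of_not_ge hc, h⟩
  · refine ⟨hinv.fairM, hinv.fairN, ?_, ?_⟩
    · intro w hw w' hw' hlt hwH
      by_contra hcon
      exact absurd (hinv.fair2 w hw hwH w' hw' hcon) (by linarith)
    · intro hex
      rw [hcard]
      exact hinv.fair3 hex
end

section
/- The sequential use of minority reserves rule is not aggregation independent: there exist a finite set of workers W, a subset M ⊆ W, an injective score function s, a minority ratio m with 0 ≤ m ≤ 1 and m·q₁, m·q₂ integers, and quotas q₁, q₂ with q₁+q₂ ≤ |W|, such that φ^SM(W,⟨q₁,q₂⟩) ≠ φ^SM(W,⟨q₁+q₂⟩). -/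
open Finset

variable {ι : Type*} [DecidableEq ι]

/-- One round of the minority reserves choice from pool `P`: the `min(⌈m·q⌉, |M ∩ P|)`
highest-scoring available minority workers, then the highest-scoring remaining available
workers filling up to `q` hires in total. -/
noncomputable def smRound (M : Finset ι) (s : ι → ℝ) (m : ℝ) (P : Finset ι) (q : ℕ) :
    Finset ι :=
  let A1 := topOf s (min ⌈m * (q : ℝ)⌉₊ (P ∩ M).card) (P ∩ M)
  A1 ∪ topOf s (q - A1.card) (P \ A1)

/-- The sequential use of minority reserves rule `φ^SM`. -/
noncomputable def phiSM (M : Finset ι) (s : ι → ℝ) (m : ℝ) : Finset ι → List ℕ → Finset ι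
  | _, [] => ∅
  | P, q :: rest => smRound M s m P q ∪ phiSM M s m (P \ smRound M s m P q) rest

noncomputable def sc : ℕ → ℝ := fun n => (n : ℝ)

lemma topOf_succ (k : ℕ) (X : Finset ℕ) (x : ℕ) (hx : x ∈ X)
    (hmax : ∀ y ∈ X, y ≠ x → y < x) :
    topOf sc (k+1) X = insert x (topOf sc k (X.erase x)) := by
  have hne : X.Nonempty := ⟨x, hx⟩
  obtain ⟨hcX, hcmax⟩ := (X.exists_max_image sc hne).choose_spec
  have hcx : (X.exists_max_image sc hne).choose = x := by
    by_contra h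
    have h1 : sc (X.exists_max_image sc hne).choose < sc x :=
      Nat.cast_lt.mpr (hmax _ hcX h)
    exact absurd (hcmax x hx) (not_le.mpr h1)
  rw [topOf, dif_pos hne, hcx]

lemma topOf_zero (X : Finset ℕ) : topOf sc 0 X = ∅ := by rw [topOf]

lemma T1 : topOf sc 2 ({0,4,5} : Finset ℕ) = {4, 5} := by
  rw [topOf_succ 1 _ 5 (by decide) (by decide),
      show ({0,4,5} : Finset ℕ).erase 5 = {0,4} by decide,
      topOf_succ 0 _ 4 (by decide) (by decide), topOf_zero]; decide

lemma T2 : topOf sc 2 ({0,1,2,3} : Finset ℕ) = {2, 3} := by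
  rw [topOf_succ 1 _ 3 (by decide) (by decide),
      show ({0,1,2,3} : Finset ℕ).erase 3 = {0,1,2} by decide,
      topOf_succ 0 _ 2 (by decide) (by decide), topOf_zero]; decide

lemma T3 : topOf sc 1 ({0,4,5} : Finset ℕ) = {5} := by
  rw [topOf_succ 0 _ 5 (by decide) (by decide), topOf_zero]; decide

lemma T4 : topOf sc 1 ({0,1,2,3,4} : Finset ℕ) = {4} := by
  rw [topOf_succ 0 _ 4 (by decide) (by decide), topOf_zero]; decide

lemma T5 : topOf sc 1 ({0} : Finset ℕ) = {0} := by
  rw [topOf_succ 0 _ 0 (by decide) (by decide), topOf_zero]; decide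

lemma T6 : topOf sc 1 ({1,2,3} : Finset ℕ) = {3} := by
  rw [topOf_succ 0 _ 3 (by decide) (by decide), topOf_zero]; decide

lemma R1 : smRound ({0,4,5} : Finset ℕ) sc (1/2) {0,1,2,3,4,5} 2 = {4,5} := by
  simp only [smRound]
  rw [show ({0,1,2,3,4,5} : Finset ℕ) ∩ {0,4,5} = {0,4,5} by decide,
      show ⌈(1/2:ℝ) * ((2:ℕ):ℝ)⌉₊ = 1 by norm_num,
      show ({0,4,5} : Finset ℕ).card = 3 by decide,
      show min 1 3 = 1 from rfl, T3,
      show ({5} : Finset ℕ).card = 1 by decide,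
      show (2 - 1 : ℕ) = 1 from rfl,
      show ({0,1,2,3,4,5} : Finset ℕ) \ {5} = {0,1,2,3,4} by decide, T4]
  decide

lemma R2 : smRound ({0,4,5} : Finset ℕ) sc (1/2) {0,1,2,3} 2 = {0,3} := by
  simp only [smRound]
  rw [show ({0,1,2,3} : Finset ℕ) ∩ {0,4,5} = {0} by decide,
      show ⌈(1/2:ℝ) * ((2:ℕ):ℝ)⌉₊ = 1 by norm_num,
      show ({0} : Finset ℕ).card = 1 by decide,
      show min 1 1 = 1 from rfl, T5,
      show ({0} : Finset ℕ).card = 1 by decide,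
      show (2 - 1 : ℕ) = 1 from rfl,
      show ({0,1,2,3} : Finset ℕ) \ {0} = {1,2,3} by decide, T6]
  decide

lemma Rbig : smRound ({0,4,5} : Finset ℕ) sc (1/2) {0,1,2,3,4,5} 4 = {2,3,4,5} := by
  simp only [smRound]
  rw [show ({0,1,2,3,4,5} : Finset ℕ) ∩ {0,4,5} = {0,4,5} by decide,
      show ⌈(1/2:ℝ) * ((4:ℕ):ℝ)⌉₊ = 2 by norm_num,
      show ({0,4,5} : Finset ℕ).card = 3 by decide,
      show min 2 3 = 2 from rfl, T1,
      show ({4,5} : Finset ℕ).card = 2 by decide,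
      show (4 - 2 : ℕ) = 2 from rfl,
      show ({0,1,2,3,4,5} : Finset ℕ) \ {4,5} = {0,1,2,3} by decide, T2]
  decide

/-- The sequential use of minority reserves rule is not aggregation
independent: there is a hiring problem and quotas `q₁, q₂` with `q₁+q₂ ≤ |W|` and
`m·q₁`, `m·q₂` integers such that `φ^SM(W,⟨q₁,q₂⟩) ≠ φ^SM(W,⟨q₁+q₂⟩)`. -/
theorem phiSM_not_aggregation_independent :
    ∃ (W M : Finset ℕ) (s : ℕ → ℝ) (m : ℝ) (q₁ q₂ : ℕ),
      M ⊆ W ∧ Set.InjOn s ↑W ∧ 0 ≤ m ∧ m ≤ 1 ∧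
      (∃ k : ℕ, m * (q₁ : ℝ) = (k : ℝ)) ∧ (∃ k : ℕ, m * (q₂ : ℝ) = (k : ℝ)) ∧
      q₁ + q₂ ≤ W.card ∧
      phiSM M s m W [q₁, q₂] ≠ phiSM M s m W [q₁ + q₂] := by
  refine ⟨{0,1,2,3,4,5}, {0,4,5}, sc, 1/2, 2, 2, by decide,
    fun a _ b _ h => Nat.cast_injective h, by norm_num, by norm_num,
    ⟨1, by norm_num⟩, ⟨1, by norm_num⟩, by decide, ?_⟩
  have hL : phiSM ({0,4,5} : Finset ℕ) sc (1/2) {0,1,2,3,4,5} [2, 2] = {0,3,4,5} := by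
    rw [phiSM, phiSM, phiSM, R1,
        show ({0,1,2,3,4,5} : Finset ℕ) \ {4,5} = {0,1,2,3} by decide, R2]
    decide
  have hR : phiSM ({0,4,5} : Finset ℕ) sc (1/2) {0,1,2,3,4,5} [2 + 2] = {2,3,4,5} := by
    rw [show (2 + 2 : ℕ) = 4 from rfl, phiSM, phiSM, Rbig]
    decide
  rw [hL, hR]
  decide
end
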